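/- arXiv:math/0308286 — 3 statements merged into one kernel-verified Lean document; each statement's English description precedes it below -/
import Mathlib

section
/- Let p be prime and let A, Ã ⊆ ℤ/pℤ be nonempty subsets with |A| = |Ã|. Then the linear map T: ℓ²(A) → ℓ²(Ã) sending f (a function on ℤ/pℤ supported in A) to the restriction of its Fourier transform f̂ to Ã is invertible. -/
open Complex

noncomputable def dft {p : ℕ} [NeZero p] (f : ZMod p → ℂ) (ξ : ZMod p) : ℂ :=
  (p : ℂ)⁻¹ * ∑ x : ZMod p, f x * Complex.exp (-2 * Real.pi * Complex.I * ((x.val : ℂ) * (ξ.val : ℂ)) / p)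

section ChebotarevCore

open Polynomial Matrix Finset


lemma desc_cast (m : ℕ) : ∀ k : ℕ, (m.descFactorial k : ℤ) = ∏ i ∈ range k, ((m:ℤ) - i) := by
  intro k
  induction k with
  | zero => simp
  | succ k ih =>
    rw [Nat.descFactorial_succ, prod_range_succ, ← ih]
    by_cases h : k ≤ m
    · push_cast [Nat.cast_sub h]; ring
    · rw [Nat.descFactorial_eq_zero_iff_lt.2 (by omega)]; simp

-- binomial expansion divisibility at X=1
lemma expand_dvd (m l : ℕ) :
    ((X:ℤ[X]) - 1)^(l+1) ∣ X^m - ∑ k ∈ range (l+1), C (m.choose k : ℤ) * (X-1)^k := by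
  have hfull : (X:ℤ[X])^m = ∑ k ∈ range (m+1), C (m.choose k : ℤ) * (X-1)^k := by
    conv_lhs => rw [show (X:ℤ[X]) = (X - 1) + 1 by ring]
    rw [add_pow]
    refine Finset.sum_congr rfl fun k hk => by simp [C_eq_intCast]; push_cast; ring
  set K := max (m+1) (l+1) with hK
  have hbig : (X:ℤ[X])^m = ∑ k ∈ range K, C (m.choose k : ℤ) * (X-1)^k := by
    rw [hfull]
    apply Finset.sum_subset (Finset.range_subset_range.2 (le_max_left (m+1) (l+1)))
    intro k _ hk
    simp only [mem_range, not_lt] at hk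
    rw [Nat.choose_eq_zero_of_lt (by omega)]
    simp
  rw [hbig, ← Finset.sum_range_add_sum_Ico _ (le_max_right (m+1) (l+1)),
    add_sub_cancel_left]
  exact Finset.dvd_sum fun k hk => Dvd.dvd.mul_left
    (pow_dvd_pow _ (Finset.mem_Ico.1 hk).1) _

lemma cheb_det_ne_zero {p n : ℕ} (hp : p.Prime) (ζ : ℂ) (hζ : IsPrimitiveRoot ζ p)
    (a b : Fin n → ℕ) (ha : ∀ i, a i < p) (hb : ∀ j, b j < p)
    (hainj : Function.Injective a) (hbinj : Function.Injective b) :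
    (Matrix.of fun i j : Fin n => ζ ^ (a i * b j)).det ≠ 0 := by
  haveI : Fact p.Prime := ⟨hp⟩
  have hPI : Prime (p : ℤ) := Int.prime_iff_natAbs_prime.2 (by simpa)
  have hnp : n ≤ p := by
    have hinj : Function.Injective (fun i : Fin n => (⟨a i, ha i⟩ : Fin p)) := by
      intro i j h; exact hainj (congrArg Fin.val h)
    simpa using Fintype.card_le_of_injective _ hinj
  -- integer Vandermonde and adjugate
  set V₀ : Matrix (Fin n) (Fin n) ℤ := Matrix.vandermonde (fun i => (a i : ℤ)) with hV₀
  set c : ℤ := V₀.det with hc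
  set ad : Matrix (Fin n) (Fin n) ℤ := V₀.adjugate with had
  have hadV : ∀ (l : Fin n) (d : ℕ) (hd : d < n),
      (∑ i, ad l i * (a i : ℤ)^d) = if (l:ℕ) = d then c else 0 := by
    intro l d hd
    have := congrFun (congrFun (Matrix.adjugate_mul V₀) l) ⟨d, hd⟩
    simp only [Matrix.mul_apply, Matrix.smul_apply, Matrix.one_apply, smul_eq_mul] at this
    simp only [hV₀, Matrix.vandermonde_apply] at this
    rw [had, hV₀, this, hc, hV₀]
    rcases eq_or_ne (l:ℕ) d with h | h
    · rw [if_pos (Fin.ext h), if_pos h, mul_one]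
    · rw [if_neg (fun hh => h (by rw [hh])), if_neg h, mul_zero]
  -- the t matrix
  set t : Matrix (Fin n) (Fin n) ℤ :=
    Matrix.of (fun l j => ∑ i, ad l i * ((a i * b j).choose (l:ℕ) : ℤ)) with htdef
  -- key computation
  have key : ∀ (l j : Fin n) (k : ℕ), k ≤ (l:ℕ) →
      (k.factorial : ℤ) * (∑ i, ad l i * ((a i * b j).choose k : ℤ))
        = if k = (l:ℕ) then c * ((b j : ℤ))^(l:ℕ) else 0 := by
    intro l j k hkl
    set q : Polynomial ℤ := ∏ s ∈ range k, (X - C (s:ℤ)) with hq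
    have hqmonic : q.Monic := monic_prod_of_monic _ _ fun s _ => monic_X_sub_C _
    have hqdeg : q.natDegree = k := by
      rw [hq]
      exact (Polynomial.natDegree_prod (range k) (fun s : ℕ => (X:ℤ[X]) - C (s:ℤ))
        (fun s _ => (monic_X_sub_C (s:ℤ)).ne_zero)).trans (by
        rw [Finset.sum_congr rfl fun (x : ℕ) _ => Polynomial.natDegree_X_sub_C ((x:ℤ))]
        simp)
    have heval : ∀ m : ℕ, q.eval (m:ℤ) = (k.factorial : ℤ) * (m.choose k : ℤ) := by
      intro m
      rw [hq, eval_prod]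
      simp only [eval_sub, eval_X, eval_C]
      rw [← desc_cast, Nat.descFactorial_eq_factorial_mul_choose]
      push_cast; ring
    calc (k.factorial : ℤ) * ∑ i, ad l i * ((a i * b j).choose k : ℤ)
        = ∑ i, ad l i * q.eval ((a i * b j : ℕ) : ℤ) := by
          rw [Finset.mul_sum]
          refine Finset.sum_congr rfl fun i _ => ?_
          rw [heval]; ring
      _ = ∑ i, ad l i * ∑ d ∈ range (k+1), q.coeff d * ((a i:ℤ)^d * ((b j:ℤ))^d) := by
          refine Finset.sum_congr rfl fun i _ => ?_
          rw [eval_eq_sum_range, hqdeg]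
          congr 1
          refine Finset.sum_congr rfl fun d _ => ?_
          push_cast; ring
      _ = ∑ d ∈ range (k+1), ∑ i, q.coeff d * ((b j:ℤ))^d * (ad l i * (a i:ℤ)^d) := by
          rw [Finset.sum_comm]
          refine Finset.sum_congr rfl fun i _ => ?_
          rw [Finset.mul_sum]
          exact Finset.sum_congr rfl fun d _ => by ring
      _ = ∑ d ∈ range (k+1), q.coeff d * ((b j:ℤ))^d * (if (l:ℕ) = d then c else 0) := by
          refine Finset.sum_congr rfl fun d hd => ?_
          rw [← Finset.mul_sum,
            hadV l d (lt_of_le_of_lt (le_trans (Nat.lt_succ_iff.1 (mem_range.1 hd)) hkl) l.isLt)]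
      _ = if k = (l:ℕ) then c * ((b j : ℤ))^(l:ℕ) else 0 := by
          simp only [mul_ite, mul_zero]
          rw [Finset.sum_ite_eq]
          rcases eq_or_ne k (l:ℕ) with h | h
          · rw [if_pos (by simp [← h]), if_pos h]
            have hcl : q.coeff (l:ℕ) = 1 := by rw [← h, ← hqdeg]; exact hqmonic.coeff_natDegree
            rw [hcl]; ring
          · rw [if_neg (by simp; omega), if_neg h]
  -- polynomial matrix setup
  set M : Matrix (Fin n) (Fin n) ℤ[X] := Matrix.of (fun i j => X ^ (a i * b j)) with hM
  set g : Matrix (Fin n) (Fin n) ℤ[X] := ((Polynomial.C : ℤ →+* ℤ[X]).mapMatrix ad) * M with hg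
  have hfacne : ∀ k : ℕ, ((k.factorial : ℤ)) ≠ 0 := fun k => Int.natCast_ne_zero.2 k.factorial_ne_zero
  have hsk0 : ∀ (l j : Fin n) (k : ℕ), k < (l:ℕ) →
      (∑ i, ad l i * ((a i * b j).choose k : ℤ)) = 0 := by
    intro l j k hk
    have h := key l j k (le_of_lt hk)
    rw [if_neg (Nat.ne_of_lt hk)] at h
    exact (mul_eq_zero.1 h).resolve_left (hfacne k)
  have hdvd : ∀ l j : Fin n, ∃ u : ℤ[X],
      g l j - C (t l j) * (X - 1)^(l:ℕ) = (X-1)^((l:ℕ)+1) * u := by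
    intro l j
    have h1 : g l j = ∑ i, C (ad l i) * X^(a i * b j) := by
      simp [hg, hM, Matrix.mul_apply]
    have h2 : (∑ i, C (ad l i) * ∑ k ∈ range ((l:ℕ)+1), C (((a i * b j).choose k : ℤ)) * (X-1)^k)
        = C (t l j) * (X-1)^(l:ℕ) := by
      have e1 : ∀ i : Fin n, C (ad l i) * ∑ k ∈ range ((l:ℕ)+1), C (((a i * b j).choose k : ℤ)) * (X-1)^k
          = ∑ k ∈ range ((l:ℕ)+1), C (ad l i * ((a i * b j).choose k : ℤ)) * (X-1)^k := by
        intro i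
        rw [Finset.mul_sum]
        exact Finset.sum_congr rfl fun k _ => by rw [_root_.map_mul]; ring
      rw [Finset.sum_congr rfl fun i _ => e1 i, Finset.sum_comm]
      have e2 : ∀ k, (∑ i, C (ad l i * ((a i * b j).choose k : ℤ)) * (X-1)^k)
          = C (∑ i, ad l i * ((a i * b j).choose k : ℤ)) * ((X:ℤ[X])-1)^k := by
        intro k
        rw [← Finset.sum_mul, ← map_sum]
      rw [Finset.sum_congr rfl fun k _ => e2 k, Finset.sum_range_succ,
        Finset.sum_eq_zero fun k hk => by
          rw [hsk0 l j k (mem_range.1 hk), _root_.map_zero, zero_mul], zero_add]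
      rfl
    have hrepr : g l j - C (t l j) * (X - 1)^(l:ℕ)
        = ∑ i, C (ad l i) * (X^(a i * b j)
            - ∑ k ∈ range ((l:ℕ)+1), C (((a i * b j).choose k : ℤ)) * (X-1)^k) := by
      rw [Finset.sum_congr rfl fun i (_ : i ∈ Finset.univ) => mul_sub (C (ad l i)) _ _,
        Finset.sum_sub_distrib, h2, ← h1]
    have hd : ((X:ℤ[X])-1)^((l:ℕ)+1) ∣ g l j - C (t l j) * (X - 1)^(l:ℕ) := by
      rw [hrepr]
      exact Finset.dvd_sum fun i _ => Dvd.dvd.mul_left (expand_dvd (a i * b j) (l:ℕ)) _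
    exact hd
  choose r hr using hdvd
  set H : Matrix (Fin n) (Fin n) ℤ[X] := Matrix.of (fun l j => C (t l j) + (X-1) * r l j) with hH
  have hgH : g = Matrix.of (fun (l j : Fin n) => ((X:ℤ[X])-1)^(l:ℕ) * H l j) := by
    refine Matrix.ext fun l j => ?_
    have h := hr l j
    simp only [hH, Matrix.of_apply]
    linear_combination h
  have hdetfact : g.det = (∏ l : Fin n, ((X:ℤ[X])-1)^(l:ℕ)) * H.det := by
    rw [hgH]
    exact Matrix.det_mul_column _ _
  have hdetg : g.det = C (c ^ (n-1)) * M.det := by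
    rw [hg, Matrix.det_mul]
    congr 1
    rw [← RingHom.map_det, had, Matrix.det_adjugate, ← hc]
    simp
  have hmain : C (c ^ (n-1)) * M.det = (∏ l : Fin n, ((X:ℤ[X])-1)^(l:ℕ)) * H.det := by
    rw [← hdetg, hdetfact]
  intro hcontra
  set φ : ℤ[X] →+* ℂ := (Polynomial.aeval ζ : ℤ[X] →ₐ[ℤ] ℂ).toRingHom with hφ
  have hφdetM : φ M.det = 0 := by
    rw [RingHom.map_det]
    have e : φ.mapMatrix M = Matrix.of fun i j : Fin n => ζ ^ (a i * b j) := by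
      ext i j
      simp [hφ, hM]
    rw [e, hcontra]
  have hζ1 : ζ - 1 ≠ 0 := sub_ne_zero.2 (hζ.ne_one hp.one_lt)
  have hHdet0 : Polynomial.aeval ζ H.det = 0 := by
    have h := congrArg φ hmain
    rw [_root_.map_mul, hφdetM, mul_zero, _root_.map_mul] at h
    have hne : φ (∏ l : Fin n, ((X:ℤ[X])-1)^(l:ℕ)) ≠ 0 := by
      rw [_root_.map_prod]
      refine Finset.prod_ne_zero_iff.2 fun l _ => ?_
      rw [_root_.map_pow]
      apply pow_ne_zero
      simpa [hφ] using hζ1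
    exact (mul_eq_zero.1 h.symm).resolve_left hne
  have hdvdcyc : Polynomial.cyclotomic p ℤ ∣ H.det :=
    (Polynomial.cyclotomic_eq_minpoly hζ hp.pos) ▸
      minpoly.isIntegrallyClosed_dvd (hζ.isIntegral hp.pos) hHdet0
  obtain ⟨W, hW⟩ := hdvdcyc
  have hevalt : (Polynomial.evalRingHom (1:ℤ)) H.det = t.det := by
    rw [RingHom.map_det]
    congr 1
    ext l j
    simp [hH]
  have hpt : (p:ℤ) ∣ t.det := by
    rw [← hevalt, hW, _root_.map_mul]
    apply dvd_mul_of_dvd_left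
    have e : (Polynomial.evalRingHom (1:ℤ)) (Polynomial.cyclotomic p ℤ) = (p:ℤ) := by
      simp [Polynomial.eval_one_cyclotomic_prime]
    rw [e]
  have hintnd : ∀ (f : Fin n → ℕ), (∀ i, f i < p) → Function.Injective f →
      ¬ (p:ℤ) ∣ ∏ i : Fin n, ∏ jj ∈ Finset.Ioi i, ((f jj : ℤ) - f i) := by
    intro f hfp hfinj hdd
    rw [Prime.dvd_finset_prod_iff hPI] at hdd
    obtain ⟨i, -, hi⟩ := hdd
    rw [Prime.dvd_finset_prod_iff hPI] at hi
    obtain ⟨jj, hjj, hdd2⟩ := hi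
    have hne : (f jj : ℤ) - f i ≠ 0 :=
      sub_ne_zero.2 fun h => absurd (hfinj (Nat.cast_inj.1 h)) (Finset.mem_Ioi.1 hjj).ne'
    refine hne (Int.eq_zero_of_abs_lt_dvd hdd2 ?_)
    have h1 := hfp i
    have h2 := hfp jj
    rw [abs_sub_lt_iff]
    constructor <;> push_cast <;> omega
  have hpc : ¬ (p:ℤ) ∣ c := by
    rw [hc, hV₀, Matrix.det_vandermonde]
    exact hintnd a ha hainj
  have hpb : ¬ (p:ℤ) ∣ ∏ i : Fin n, ∏ jj ∈ Finset.Ioi i, ((b jj : ℤ) - b i) := hintnd b hb hbinj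
  have hdetid : (∏ l : Fin n, ((l:ℕ).factorial : ℤ)) * t.det
      = c ^ n * ∏ i : Fin n, ∏ jj ∈ Finset.Ioi i, ((b jj : ℤ) - b i) := by
    have h1 : (Matrix.of fun l j : Fin n => (((l:ℕ).factorial : ℤ)) * t l j).det
        = (∏ l : Fin n, ((l:ℕ).factorial : ℤ)) * t.det :=
      Matrix.det_mul_column (fun l : Fin n => ((l:ℕ).factorial : ℤ)) t
    have h2 : (Matrix.of fun l j : Fin n => (((l:ℕ).factorial : ℤ)) * t l j)
        = Matrix.of fun l j : Fin n => c * ((b j : ℤ))^(l:ℕ) := by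
      ext l j
      have h := key l j (l:ℕ) le_rfl
      rw [if_pos rfl] at h
      simpa [htdef] using h
    have h3 : (Matrix.of fun l j : Fin n => c * ((b j:ℤ))^(l:ℕ)).det
        = (∏ _l : Fin n, c) * (Matrix.of fun l j : Fin n => ((b j:ℤ))^(l:ℕ)).det :=
      Matrix.det_mul_column (fun _ => c) (Matrix.of fun l j : Fin n => ((b j:ℤ))^(l:ℕ))
    have h4 : (Matrix.of fun l j : Fin n => ((b j:ℤ))^(l:ℕ))
        = (Matrix.vandermonde fun i : Fin n => (b i : ℤ)).transpose := by
      ext l j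
      simp [Matrix.vandermonde_apply, Matrix.transpose_apply]
    rw [← h1, h2, h3, h4, Matrix.det_transpose, Matrix.det_vandermonde]
    congr 1
    simp [Finset.prod_const, Finset.card_univ]
  have hfin : (p:ℤ) ∣ c ^ n * ∏ i : Fin n, ∏ jj ∈ Finset.Ioi i, ((b jj : ℤ) - b i) := by
    rw [← hdetid]
    exact Dvd.dvd.mul_left hpt _
  rcases hPI.dvd_mul.1 hfin with h | h
  · exact hpc (hPI.dvd_of_dvd_pow h)
  · exact hpb h


end ChebotarevCore

theorem fourier_restriction_bijective
    (p : ℕ) (hp : p.Prime) [NeZero p]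
    (A Atilde : Set (ZMod p)) (hA : A.Nonempty) (hAt : Atilde.Nonempty)
    (hcard : A.ncard = Atilde.ncard) :
    Function.Bijective
      (fun f : {f : ZMod p → ℂ // ∀ x : ZMod p, x ∉ A → f x = 0} =>
        (fun ξ : Atilde => dft f.val ξ.val)) := by
  classical
  haveI : Fintype ↥A := Set.Finite.fintype (Set.toFinite A)
  haveI : Fintype ↥Atilde := Set.Finite.fintype (Set.toFinite Atilde)
  have hcards : Fintype.card ↥A = Fintype.card ↥Atilde := by
    have h1 : Nat.card ↥A = Nat.card ↥Atilde := by
      rw [Nat.card_coe_set_eq, Nat.card_coe_set_eq, hcard]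
    simpa [Nat.card_eq_fintype_card] using h1
  have hpne : (p : ℂ) ≠ 0 := Nat.cast_ne_zero.2 (NeZero.ne p)
  set ζ : ℂ := (Complex.exp (2 * Real.pi * Complex.I / p))⁻¹ with hζdef
  have hζ : IsPrimitiveRoot ζ p := (Complex.isPrimitiveRoot_exp p (NeZero.ne p)).inv
  have hexp : ∀ x ξ : ZMod p,
      Complex.exp (-2 * Real.pi * Complex.I * ((x.val : ℂ) * (ξ.val : ℂ)) / p)
        = ζ ^ (x.val * ξ.val) := by
    intro x ξ
    rw [hζdef, ← Complex.exp_neg, ← Complex.exp_nat_mul]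
    congr 1
    push_cast
    ring
  set Mmat : Matrix ↥Atilde ↥A ℂ :=
    Matrix.of (fun ξ x => (p:ℂ)⁻¹ * ζ ^ ((x : ZMod p).val * (ξ : ZMod p).val)) with hMmat
  have hform : ∀ (f : ZMod p → ℂ), (∀ x : ZMod p, x ∉ A → f x = 0) → ∀ ξ : ↥Atilde,
      dft f (ξ : ZMod p) = ∑ x : ↥A, Mmat ξ x * f ↑x := by
    intro f hf ξ
    unfold dft
    have h1 : ∑ x : ZMod p, f x * Complex.exp (-2 * Real.pi * Complex.I * ((x.val : ℂ) * (((ξ:ZMod p).val : ℂ))) / p)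
        = ∑ x : ↥A, f ↑x * ζ ^ ((x : ZMod p).val * (ξ : ZMod p).val) := by
      rw [← Finset.sum_subtype A.toFinset (fun x => Set.mem_toFinset) (fun x => f x * ζ ^ (x.val * (ξ:ZMod p).val))]
      rw [← Finset.sum_subset (Finset.subset_univ A.toFinset) (fun x _ hx => by
        rw [hf x (fun hmem => hx (Set.mem_toFinset.2 hmem)), zero_mul])]
      exact Finset.sum_congr rfl fun x _ => by rw [hexp]
    rw [h1, Finset.mul_sum]
    exact Finset.sum_congr rfl fun x _ => by rw [hMmat]; simp [Matrix.of_apply]; ring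
  set e : ↥A ≃ ↥Atilde := Fintype.equivOfCardEq hcards with he
  set Q : Matrix ↥Atilde ↥Atilde ℂ := Matrix.of (fun ξ η => Mmat ξ (e.symm η)) with hQ
  have hQdet : Q.det ≠ 0 := by
    set eA : Fin (Fintype.card ↥A) ≃ ↥A := (Fintype.equivFin ↥A).symm with heA
    set eT : Fin (Fintype.card ↥A) ≃ ↥Atilde := eA.trans e with heT
    have hsub : Q.det = (Q.submatrix eT eT).det := (Matrix.det_submatrix_equiv_self eT Q).symm
    set na : Fin (Fintype.card ↥A) → ℕ := fun j => ((eA j : ZMod p)).val with hna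
    set nb : Fin (Fintype.card ↥A) → ℕ := fun i => ((eT i : ZMod p)).val with hnb
    have hQsub : Q.submatrix eT eT
        = (p:ℂ)⁻¹ • Matrix.of (fun i j => ζ ^ (nb i * na j)) := by
      ext i j
      simp only [Matrix.submatrix_apply, hQ, Matrix.of_apply, Matrix.smul_apply, smul_eq_mul]
      rw [heT]
      simp only [Equiv.trans_apply, Equiv.symm_apply_apply]
      rw [mul_comm (nb i) (na j)]
      rfl
    have hinj : ∀ (g : Fin (Fintype.card ↥A) → ZMod p), Function.Injective g →
        Function.Injective (fun i => (g i).val) := fun g hg i j h =>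
      hg (ZMod.val_injective p h)
    have hcheb := cheb_det_ne_zero hp ζ hζ nb na
      (fun i => ZMod.val_lt _) (fun j => ZMod.val_lt _)
      (hinj (fun i => (eT i : ZMod p)) (fun i j h => eT.injective (Subtype.coe_injective h)))
      (hinj (fun j => (eA j : ZMod p)) (fun i j h => eA.injective (Subtype.coe_injective h)))
    rw [hsub, hQsub, Matrix.det_smul]
    exact mul_ne_zero (pow_ne_zero _ (inv_ne_zero hpne)) hcheb
  have hQunit : IsUnit Q.det := isUnit_iff_ne_zero.2 hQdet
  rw [Function.bijective_iff_has_inverse]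
  refine ⟨fun w => ⟨fun x => if hx : x ∈ A then (Q⁻¹).mulVec w (e ⟨x, hx⟩) else 0,
      fun x hx => dif_neg hx⟩, ?_, ?_⟩
  · -- left inverse
    intro f
    apply Subtype.ext
    funext x
    by_cases hx : x ∈ A
    · simp only [dif_pos hx]
      have hFf : (fun ξ : ↥Atilde => dft f.val ξ) = Q.mulVec (fun η => f.val ↑(e.symm η)) := by
        funext ξ
        rw [hform f.val f.2 ξ]
        rw [← Equiv.sum_comp e.symm (fun x : ↥A => Mmat ξ x * f.val ↑x)]
        rfl
      have : (fun ξ : ↥Atilde => dft f.val (ξ : ZMod p)) = Q.mulVec (fun η => f.val ↑(e.symm η)) := hFf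
      rw [this, Matrix.mulVec_mulVec, Matrix.nonsing_inv_mul Q hQunit, Matrix.one_mulVec]
      simp
    · simp only [dif_neg hx]
      exact (f.2 x hx).symm
  · -- right inverse
    intro w
    funext ξ
    dsimp only
    rw [hform _ (fun x hx => dif_neg hx) ξ]
    have : ∀ x : ↥A, (if hx : (x:ZMod p) ∈ A then (Q⁻¹).mulVec w (e ⟨x, hx⟩) else 0)
        = (Q⁻¹).mulVec w (e x) := by
      intro x
      rw [dif_pos x.2]
    rw [Finset.sum_congr rfl fun x _ => by rw [this x]]
    rw [← Equiv.sum_comp e.symm (fun x : ↥A => Mmat ξ x * (Q⁻¹).mulVec w (e x))]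
    simp only [Equiv.apply_symm_apply]
    have : ∑ η : ↥Atilde, Mmat ξ (e.symm η) * (Q⁻¹).mulVec w η = (Q * Q⁻¹).mulVec w ξ := by
      rw [← Matrix.mulVec_mulVec]
      rfl
    rw [this, Matrix.mul_nonsing_inv Q hQunit, Matrix.one_mulVec]
end

section
/- Let p be prime and f: ℤ/pℤ → ℂ a nonzero function. Then |supp(f)| + |supp(f̂)| ≥ p + 1. -/
open Complex

/-!
Chebotarev's theorem, in Tao's proof: for a prime `p`, a primitive `p`-th root of unity `ω` and
distinct exponents `a i`, `b j < p`, the minor `det (ω ^ (a i * b j))` is nonzero. The alternant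
`det (X i ^ b j)` is the Vandermonde polynomial times some `Q` with integer coefficients.
Substituting `X i ↦ x ^ i` and cancelling the powers of `x - 1` gives
`∏ (j - i) * Q (1, …, 1) = ∏ (b j - b i)`, which is prime to `p`. If the minor vanished, so would
`Q (ω ^ a)`; then the cyclotomic polynomial `Φ_p` divides `Q (x ^ a)`, and `p = Φ_p (1)` divides
`Q (1, …, 1)`.

If `|supp f| + |supp f̂| ≤ p`, pick `|supp f|` frequencies outside `supp f̂`: the corresponding
square minor kills the vector of values of `f` on its support, so that vector is zero.
-/

open Finset

theorem Finset.prod_dvd_of_prime_of_pairwise_not_dvd {M ι : Type*} [CommMonoidWithZero M]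
    {s : Finset ι} {g : ι → M} {D : M} (hprime : ∀ i ∈ s, Prime (g i))
    (hndvd : (s : Set ι).Pairwise fun i j => ¬ g i ∣ g j) (hdvd : ∀ i ∈ s, g i ∣ D) :
    ∏ i ∈ s, g i ∣ D := by
  classical
  induction s using Finset.induction_on generalizing D with
  | empty => simp
  | insert a s ha ih =>
    obtain ⟨D', rfl⟩ := hdvd a (mem_insert_self a s)
    rw [prod_insert ha]
    refine mul_dvd_mul_left _ (ih (fun i hi => hprime i (mem_insert_of_mem hi))
      (hndvd.mono (by simp)) fun i hi => ?_)
    have hne : i ≠ a := fun h => ha (h ▸ hi)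
    exact ((hprime i (mem_insert_of_mem hi)).dvd_or_dvd
      (hdvd i (mem_insert_of_mem hi))).resolve_left (hndvd (by simp [hi]) (by simp) hne)

namespace MvPolynomial

variable {R σ : Type*} [CommRing R]

theorem X_sub_X_dvd_sub_rename [DecidableEq σ] (i j : σ) (P : MvPolynomial σ R) :
    X j - X i ∣ P - rename (Function.update id j i) P := by
  rw [← Ideal.mem_span_singleton, ← Ideal.Quotient.eq]
  have hmk : (Ideal.Quotient.mkₐ R (Ideal.span {X j - X i})).comp
      (rename (Function.update id j i)) = Ideal.Quotient.mkₐ R _ := by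
    refine algHom_ext fun k => ?_
    obtain rfl | hk := eq_or_ne k j
    · simpa using (Ideal.Quotient.eq.mpr (Ideal.mem_span_singleton_self (X k - X i))).symm
    · simp [hk]
  exact (DFunLike.congr_fun hmk P).symm

theorem prime_X_sub_X [IsDomain R] {i j : σ} (hij : i ≠ j) :
    Prime (X j - X i : MvPolynomial σ R) := by
  classical
  have hker : Ideal.span {X j - X i} = RingHom.ker (rename (R := R) (Function.update id j i)) := by
    refine le_antisymm ?_ fun P hP => ?_
    · simp [Ideal.span_le, hij]
    · simpa [Ideal.mem_span_singleton, RingHom.mem_ker.mp hP] using X_sub_X_dvd_sub_rename i j P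
  rw [← Ideal.span_singleton_prime (sub_ne_zero.mpr (X_injective.ne hij.symm)), hker]
  exact RingHom.ker_isPrime _

variable (R) in
noncomputable def vandermondePoly (n : ℕ) : MvPolynomial (Fin n) R :=
  ∏ i, ∏ j ∈ Ioi i, (X j - X i)

variable (R) in
noncomputable def alternant {n : ℕ} (b : Fin n → ℕ) : MvPolynomial (Fin n) R :=
  (Matrix.of fun i j => X i ^ b j).det

theorem aeval_vandermondePoly {S : Type*} [CommRing S] [Algebra R S] {n : ℕ} (v : Fin n → S) :
    aeval v (vandermondePoly R n) = ∏ i, ∏ j ∈ Ioi i, (v j - v i) := by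
  simp [vandermondePoly]

theorem aeval_alternant {S : Type*} [CommRing S] [Algebra R S] {n : ℕ} (v : Fin n → S)
    (b : Fin n → ℕ) : aeval v (alternant R b) = (Matrix.of fun i j => v i ^ b j).det := by
  rw [alternant, AlgHom.map_det]
  congr 1
  ext i j
  simp

theorem X_sub_X_dvd_alternant {n : ℕ} {i j : Fin n} (hij : i ≠ j) (b : Fin n → ℕ) :
    X j - X i ∣ alternant R b := by
  have hdvd := X_sub_X_dvd_sub_rename i j (alternant R b)
  have hrename : rename (Function.update id j i) (alternant R b) = 0 := by
    rw [rename_eq_aeval, aeval_alternant]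
    exact Matrix.det_zero_of_row_eq hij.symm (by funext k; simp [hij])
  rwa [hrename, sub_zero] at hdvd

theorem vandermondePoly_dvd_alternant [IsDomain R] {n : ℕ} (b : Fin n → ℕ) :
    vandermondePoly R n ∣ alternant R b := by
  rw [vandermondePoly, prod_sigma']
  have mem_pairs {q : (_ : Fin n) × Fin n} (hq : q ∈ univ.sigma fun i => Ioi i) : q.1 < q.2 := by
    simpa using hq
  refine prod_dvd_of_prime_of_pairwise_not_dvd (fun q hq => prime_X_sub_X (mem_pairs hq).ne) ?_
    fun q hq => X_sub_X_dvd_alternant (mem_pairs hq).ne b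
  rintro ⟨i, j⟩ hq ⟨i', j'⟩ hq' hne hdvd
  have hlt : i < j := mem_pairs hq
  have hlt' : i' < j' := mem_pairs hq'
  dsimp only at hdvd
  -- renaming `X j ↦ X i` kills `X j - X i` but no other `X j' - X i'` with `i' < j'`
  have h := map_dvd (rename (Function.update id j i)) hdvd
  simp only [map_sub, rename_X, Function.update_self, Function.update_of_ne hlt.ne, id_eq,
    sub_self, zero_dvd_iff, sub_eq_zero, X_inj] at h
  simp only [Function.update_apply, id] at h
  grind

theorem aeval_pow_alternant {S : Type*} [CommRing S] [Algebra R S] {n : ℕ} (y : S)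
    (b : Fin n → ℕ) :
    aeval (fun i : Fin n => y ^ (i : ℕ)) (alternant R b) =
      aeval (fun i => y ^ b i) (vandermondePoly R n) := by
  rw [aeval_alternant, aeval_vandermondePoly, ← Matrix.det_vandermonde, ← Matrix.det_transpose]
  congr 1
  ext i j
  simp [Matrix.vandermonde, ← pow_mul, mul_comm]

end MvPolynomial

namespace Polynomial

variable {R : Type*} [CommRing R]

theorem X_pow_sub_X_pow_eq {u v : ℕ} (h : u ≤ v) :
    (X : R[X]) ^ v - X ^ u = (X - 1) * (X ^ u * ∑ t ∈ range (v - u), X ^ t) := by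
  rw [mul_left_comm, mul_comm (X - 1), geom_sum_mul, mul_sub, mul_one, ← pow_add,
    Nat.add_sub_cancel' h]

theorem aeval_mvPolynomial_aeval_X_pow {S σ : Type*} [CommRing S] [Algebra R S] (x : S)
    (w : σ → ℕ) (Q : MvPolynomial σ R) :
    aeval x (MvPolynomial.aeval (fun i => (X : R[X]) ^ w i) Q) =
      MvPolynomial.aeval (fun i => x ^ w i) Q := by
  rw [← AlgHom.comp_apply, MvPolynomial.comp_aeval]
  simp

theorem exists_aeval_X_pow_vandermondePoly {n : ℕ} {w : Fin n → ℕ} (hw : Monotone w) :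
    ∃ G : R[X], MvPolynomial.aeval (fun i => X ^ w i) (MvPolynomial.vandermondePoly R n) =
      (∏ i : Fin n, ∏ _j ∈ Ioi i, (X - 1)) * G ∧
      G.eval 1 = ∏ i, ∏ j ∈ Ioi i, ((w j : R) - w i) := by
  refine ⟨∏ i, ∏ j ∈ Ioi i, X ^ w i * ∑ t ∈ range (w j - w i), X ^ t, ?_, ?_⟩
  · simp only [MvPolynomial.aeval_vandermondePoly, ← prod_mul_distrib]
    exact prod_congr rfl fun i _ => prod_congr rfl fun j hj =>
      X_pow_sub_X_pow_eq (hw (mem_Ioi.mp hj).le)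
  · simp only [eval_prod, eval_mul, eval_pow, eval_X, one_pow, one_mul, eval_finsetSum, sum_const,
      card_range, nsmul_one]
    exact prod_congr rfl fun i _ => prod_congr rfl fun j hj =>
      Nat.cast_sub (hw (mem_Ioi.mp hj).le)

end Polynomial

open Polynomial in
theorem prod_sub_mul_eval_one_of_alternant_eq {n : ℕ} {b : Fin n → ℕ} (hb : Monotone b)
    {Q : MvPolynomial (Fin n) ℤ}
    (hQ : MvPolynomial.alternant ℤ b = MvPolynomial.vandermondePoly ℤ n * Q) :
    (∏ i : Fin n, ∏ j ∈ Ioi i, ((j : ℕ) - (i : ℕ) : ℤ)) * MvPolynomial.eval (fun _ => 1) Q =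
      ∏ i, ∏ j ∈ Ioi i, ((b j : ℤ) - b i) := by
  obtain ⟨G, hG, hG1⟩ := exists_aeval_X_pow_vandermondePoly (R := ℤ) hb
  obtain ⟨H, hH, hH1⟩ := exists_aeval_X_pow_vandermondePoly (R := ℤ)
    (w := fun i : Fin n => (i : ℕ)) Fin.val_strictMono.monotone
  have h := congrArg (MvPolynomial.aeval fun i : Fin n => (X : ℤ[X]) ^ (i : ℕ)) hQ
  rw [MvPolynomial.aeval_pow_alternant, map_mul, hG, hH, mul_assoc] at h
  have hne : (∏ i : Fin n, ∏ _j ∈ Ioi i, (X - 1 : ℤ[X])) ≠ 0 :=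
    prod_ne_zero_iff.mpr fun _ _ => prod_ne_zero_iff.mpr fun _ _ => X_sub_C_ne_zero 1
  have h1 := congrArg (eval 1) (mul_left_cancel₀ hne h)
  rw [eval_mul, hG1, hH1, ← coe_aeval_eq_eval, aeval_mvPolynomial_aeval_X_pow] at h1
  simpa using h1.symm

theorem not_dvd_prod_sub_of_lt {p n : ℕ} (hp : p.Prime) {b : Fin n → ℕ} (hb : StrictMono b)
    (hbp : ∀ j, b j < p) : ¬ (p : ℤ) ∣ ∏ i, ∏ j ∈ Ioi i, ((b j : ℤ) - b i) := by
  simp only [Prime.dvd_finsetProd_iff (Nat.prime_iff_prime_int.mp hp)]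
  rintro ⟨i, -, j, hj, hdvd⟩
  have hlt := hb (mem_Ioi.mp hj)
  have := Int.le_of_dvd (by omega) hdvd
  have := hbp j
  omega

open Function

def dftWithRoot {K : Type*} [Semiring K] {p : ℕ} [NeZero p] (ω : K) (g : ZMod p → K)
    (ξ : ZMod p) : K :=
  ∑ x, g x * ω ^ (x.val * ξ.val)

namespace IsPrimitiveRoot

variable {K : Type*} [Field K] [CharZero K] {p : ℕ} {ω : K}

theorem dvd_eval_one_of_aeval_eq_zero (hp : p.Prime) (hω : IsPrimitiveRoot ω p)
    {q : Polynomial ℤ} (hq : Polynomial.aeval ω q = 0) : (p : ℤ) ∣ q.eval 1 := by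
  have : Fact p.Prime := ⟨hp⟩
  obtain ⟨r, rfl⟩ : Polynomial.cyclotomic p ℤ ∣ q := by
    rw [Polynomial.cyclotomic_eq_minpoly hω hp.pos]
    exact minpoly.isIntegrallyClosed_dvd (hω.isIntegral hp.pos) hq
  rw [Polynomial.eval_mul, Polynomial.eval_one_cyclotomic_prime]
  exact dvd_mul_right _ _

theorem det_pow_mul_ne_zero {n : ℕ} (hp : p.Prime) (hω : IsPrimitiveRoot ω p)
    {a b : Fin n → ℕ} (ha : Injective a) (hb : StrictMono b) (hap : ∀ i, a i < p)
    (hbp : ∀ j, b j < p) : (Matrix.of fun i j => ω ^ (a i * b j)).det ≠ 0 := by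
  obtain ⟨Q, hQ⟩ := MvPolynomial.vandermondePoly_dvd_alternant (R := ℤ) b
  have hdet : (Matrix.of fun i j => ω ^ (a i * b j)).det =
      MvPolynomial.aeval (fun i => ω ^ a i) (MvPolynomial.vandermondePoly ℤ n) *
        MvPolynomial.aeval (fun i => ω ^ a i) Q := by
    rw [← map_mul, ← hQ, MvPolynomial.aeval_alternant]
    simp [pow_mul]
  have hV : MvPolynomial.aeval (fun i => ω ^ a i) (MvPolynomial.vandermondePoly ℤ n) ≠ 0 := by
    rw [MvPolynomial.aeval_vandermondePoly]
    exact prod_ne_zero_iff.mpr fun i _ => prod_ne_zero_iff.mpr fun j hj => sub_ne_zero.mpr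
      fun h => (mem_Ioi.mp hj).ne' (ha (hω.pow_inj (hap j) (hap i) h))
  rw [hdet]
  refine mul_ne_zero hV fun hQ0 => not_dvd_prod_sub_of_lt hp hb hbp ?_
  rw [← prod_sub_mul_eval_one_of_alternant_eq hb.monotone hQ]
  refine dvd_mul_of_dvd_right ?_ _
  have := hω.dvd_eval_one_of_aeval_eq_zero hp
    (q := MvPolynomial.aeval (fun i => (Polynomial.X : Polynomial ℤ) ^ a i) Q)
    (by rwa [Polynomial.aeval_mvPolynomial_aeval_X_pow])
  simpa [← Polynomial.coe_aeval_eq_eval, Polynomial.aeval_mvPolynomial_aeval_X_pow] using this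

theorem eq_zero_of_sum_mul_pow_eq_zero (hp : p.Prime) (hω : IsPrimitiveRoot ω p)
    {A B : Finset ℕ} (hA : ∀ m ∈ A, m < p) (hB : ∀ k ∈ B, k < p) (hcard : #A ≤ #B)
    {c : ℕ → K} (hc : ∀ k ∈ B, ∑ m ∈ A, c m * ω ^ (m * k) = 0) : ∀ m ∈ A, c m = 0 := by
  obtain ⟨B₀, hB₀, hcard₀⟩ := exists_subset_card_eq hcard
  set a := B₀.orderEmbOfFin hcard₀
  set b := A.orderEmbOfFin rfl
  have hsum (F : ℕ → K) : ∑ j, F (b j) = ∑ m ∈ A, F m := by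
    conv_rhs => rw [← map_orderEmbOfFin_univ A rfl, sum_map]
    rfl
  have hmul : (Matrix.of fun i j => ω ^ (a i * b j)).mulVec (fun j => c (b j)) = 0 := by
    funext i
    simp only [Matrix.mulVec, dotProduct, Matrix.of_apply, Pi.zero_apply]
    rw [← hc (a i) (hB₀ (orderEmbOfFin_mem _ _ i)), ← hsum]
    simp only [mul_comm]
  have hc0 := Matrix.eq_zero_of_mulVec_eq_zero
    (hω.det_pow_mul_ne_zero hp a.injective b.strictMono
      (fun i => hB _ (hB₀ (orderEmbOfFin_mem _ _ i))) (fun j => hA _ (orderEmbOfFin_mem _ _ j)))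
    hmul
  intro m hm
  obtain ⟨j, rfl⟩ : m ∈ Set.range b := by rwa [range_orderEmbOfFin]
  exact congrFun hc0 j

variable [NeZero p]

theorem eq_zero_of_dftWithRoot_eq_zero (hp : p.Prime) (hω : IsPrimitiveRoot ω p)
    {g : ZMod p → K} {B : Finset (ZMod p)} (hcard : (support g).ncard ≤ #B)
    (hg : ∀ ξ ∈ B, dftWithRoot ω g ξ = 0) : g = 0 := by
  classical
  set A := (support g).toFinset
  have hcard' : #(A.image ZMod.val) ≤ #(B.image ZMod.val) := by
    rwa [card_image_of_injective _ (ZMod.val_injective p),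
      card_image_of_injective _ (ZMod.val_injective p), ← Set.ncard_coe_finset, Set.coe_toFinset]
  have hsum : ∀ k ∈ B.image ZMod.val, ∑ m ∈ A.image ZMod.val, g m * ω ^ (m * k) = 0 := by
    simp only [forall_mem_image]
    intro ξ hξ
    rw [sum_image (ZMod.val_injective p).injOn, ← hg ξ hξ, dftWithRoot]
    simp only [ZMod.natCast_zmod_val]
    exact sum_subset (subset_univ _) fun x _ hx => by simp_all [A]
  have hzero := hω.eq_zero_of_sum_mul_pow_eq_zero hp (by simp [ZMod.val_lt])
    (by simp [ZMod.val_lt]) hcard' hsum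
  ext x
  by_contra hx
  exact hx (by simpa using hzero x.val (mem_image_of_mem _ (by simpa [A] using hx)))

theorem ncard_support_add_ncard_support_dftWithRoot (hp : p.Prime) (hω : IsPrimitiveRoot ω p)
    {g : ZMod p → K} (hg : g ≠ 0) :
    p + 1 ≤ (support g).ncard + (support (dftWithRoot ω g)).ncard := by
  classical
  by_contra! h
  refine hg (hω.eq_zero_of_dftWithRoot_eq_zero hp (B := (support (dftWithRoot ω g)).toFinsetᶜ)
    ?_ fun ξ hξ => by simpa using hξ)
  rw [card_compl, ZMod.card, ← Set.ncard_coe_finset, Set.coe_toFinset]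
  omega

end IsPrimitiveRoot

theorem support_dft {p : ℕ} [NeZero p] (f : ZMod p → ℂ) :
    support (dft f) = support (dftWithRoot (exp (2 * Real.pi * I / p))⁻¹ f) := by
  have hexp (x ξ : ZMod p) : exp (-2 * Real.pi * I * ((x.val : ℂ) * (ξ.val : ℂ)) / p) =
      (exp (2 * Real.pi * I / p))⁻¹ ^ (x.val * ξ.val) := by
    rw [← exp_neg, ← exp_nat_mul]
    push_cast
    ring_nf
  ext ξ
  simp only [mem_support, dft, dftWithRoot, hexp]
  simp [NeZero.ne p]

theorem uncertainty_zmod_p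
    (p : ℕ) (hp : p.Prime) [NeZero p]
    (f : ZMod p → ℂ) (hf : f ≠ 0) :
    (Function.support f).ncard + (Function.support (dft f)).ncard ≥ p + 1 := by
  rw [support_dft]
  exact (isPrimitiveRoot_exp p (NeZero.ne p)).inv.ncard_support_add_ncard_support_dftWithRoot hp hf
end

section
/- Let p be prime and let A, B be nonempty subsets of ℤ/pℤ with |A| + |B| ≥ p + 1. Then there exists a function f: ℤ/pℤ → ℂ with supp(f) = A and supp(f̂) = B. -/
/-!
The heart is Chebotarev's theorem: for `p` prime every square minor `det (ω ^ (aᵢ bⱼ))` of the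
Fourier matrix, with distinct rows `aᵢ` and distinct columns `bⱼ`, is nonzero. Following Tao, if it
vanished then `Φ_p` would divide `F = ∑_σ sgn σ X ^ (∑ᵢ aᵢ b_{σ i})`, and as `Φ_p (X + 1)` has
constant term `p`, the prime `p` would divide the lowest nonzero coefficient of `F (X + 1)`.
Expanding `(∑ᵢ aᵢ b_{σ i}) ^ k` multinomially, the coefficients of index
`k < N = 0 + 1 + ⋯ + (n - 1)` vanish and the `N`-th one is `V(a) V(b) / ∏ i!`, where the
Vandermonde determinants `V(a)`, `V(b)` are units mod `p`.

Chebotarev gives Tao's uncertainty principle `|supp f| + |supp f̂| ≥ p + 1`. When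
`|S| + |T| = p + 1`, counting dimensions gives a nonzero `f` with `supp f ⊆ S` and
`supp f̂ ⊆ T`, and the uncertainty principle forces both inclusions to be equalities. In general,
every point `x ∈ A` and every frequency `ξ ∈ B` lie in such a pair `S ⊆ A`, `T ⊆ B`, so none of the
finitely many hyperplanes `f x = 0`, `f̂ ξ = 0` contains the space of `f` with `supp f ⊆ A` and
`supp f̂ ⊆ B`, and a generic element of that space has supports exactly `A` and `B`.
-/

open Complex

open Finset Polynomial Equiv Matrix Function
open scoped Nat

theorem Finset.sum_range_card_le_sum (s : Finset ℕ) : ∑ j ∈ range #s, j ≤ ∑ x ∈ s, x := by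
  induction s using Finset.induction_on_max with
  | empty => simp
  | insert a s ha ih =>
    have has : a ∉ s := fun h => (ha a h).false
    have hcard : #s ≤ a := by simpa using card_le_card fun x hx => mem_range.2 (ha x hx)
    rw [card_insert_of_notMem has, sum_insert has, sum_range_succ]
    omega

theorem Finset.eq_range_card_of_sum_eq (s : Finset ℕ) (h : ∑ x ∈ s, x = ∑ j ∈ range #s, j) :
    s = range #s := by
  induction s using Finset.induction_on_max with
  | empty => simp
  | insert a s ha ih =>
    have has : a ∉ s := fun h => (ha a h).false
    have hcard : #s ≤ a := by simpa using card_le_card fun x hx => mem_range.2 (ha x hx)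
    have hle := sum_range_card_le_sum s
    rw [card_insert_of_notMem has, sum_insert has, sum_range_succ] at h
    rw [card_insert_of_notMem has, show a = #s by omega, range_add_one, ← ih (by omega)]

theorem Nat.multinomial_univ_comp_perm {ι : Type*} [Fintype ι] (f : ι → ℕ) (τ : Perm ι) :
    Nat.multinomial univ (f ∘ τ) = Nat.multinomial univ f := by
  simp only [Nat.multinomial, Function.comp_apply, Equiv.sum_comp,
    Equiv.prod_comp τ fun i => (f i)!]

section InjectiveExponents

variable {n : ℕ} {m : Fin n → ℕ}

theorem sum_range_le_sum_of_injective (hm : Injective m) : ∑ j ∈ range n, j ≤ ∑ i, m i := by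
  simpa [card_image_of_injective _ hm, sum_image hm.injOn] using
    sum_range_card_le_sum (univ.image m)

theorem exists_perm_of_injective_of_sum_eq (hm : Injective m)
    (h : ∑ i, m i = ∑ j ∈ range n, j) : ∃ τ : Perm (Fin n), ∀ i, m i = τ i := by
  have himage : univ.image m = range n := by
    simpa [card_image_of_injective _ hm, sum_image hm.injOn, h] using
      eq_range_card_of_sum_eq (univ.image m)
  have hlt (i : Fin n) : m i < n := mem_range.1 (himage ▸ mem_image_of_mem m (mem_univ i))
  refine ⟨Equiv.ofBijective (fun i => ⟨m i, hlt i⟩) ?_, fun i => rfl⟩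
  exact Finite.injective_iff_bijective.1 fun i j hij => hm (congrArg Fin.val hij)

end InjectiveExponents

section SignedPermSum

variable {R : Type*} [CommRing R] {n : ℕ} (a b : Fin n → R)

def signedPermSum (g : R → R) : R := ∑ σ : Perm (Fin n), Perm.sign σ • g (∑ i, a i * b (σ i))

theorem signedPermSum_pow (k : ℕ) :
    signedPermSum a b (· ^ k) = ∑ m ∈ piAntidiag univ k,
      (Nat.multinomial univ m : R) * (∏ i, a i ^ m i) * (of fun x j => b x ^ m j).det := by
  simp only [signedPermSum, sum_pow_eq_sum_piAntidiag, mul_pow, prod_mul_distrib, det_apply,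
    of_apply, smul_sum, mul_sum]
  rw [sum_comm]
  refine sum_congr rfl fun m _ => sum_congr rfl fun σ _ => ?_
  rw [mul_smul_comm, mul_assoc]

theorem det_of_pow_eq_zero_of_not_injective {m : Fin n → ℕ} (hm : ¬ Injective m) :
    (of fun x j => b x ^ m j).det = 0 := by
  obtain ⟨i, j, hij, hne⟩ := not_injective_iff.1 hm
  exact det_zero_of_column_eq hne fun x => by simp [hij]

theorem det_of_pow_perm (τ : Perm (Fin n)) :
    (of fun x j => b x ^ (τ j : ℕ)).det = Perm.sign τ • (vandermonde b).det := by
  rw [show (of fun x j => b x ^ (τ j : ℕ)) = (vandermonde b).submatrix id τ from rfl,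
    det_permute', Units.smul_def, zsmul_eq_mul]

theorem sum_sign_smul_prod_pow_eq_det_vandermonde :
    ∑ τ : Perm (Fin n), Perm.sign τ • ∏ i, a i ^ (τ i : ℕ) = (vandermonde a).det := by
  rw [← det_transpose, det_apply]
  rfl

theorem signedPermSum_pow_eq_zero_of_lt {k : ℕ} (hk : k < ∑ j ∈ range n, j) :
    signedPermSum a b (· ^ k) = 0 := by
  rw [signedPermSum_pow]
  refine sum_eq_zero fun m hm => ?_
  have hninj : ¬ Injective m := fun hinj => by
    have := sum_range_le_sum_of_injective hinj
    rw [(mem_piAntidiag.1 hm).1] at this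
    omega
  rw [det_of_pow_eq_zero_of_not_injective b hninj, mul_zero]

theorem signedPermSum_pow_mul_prod_factorial :
    signedPermSum a b (· ^ ∑ j ∈ range n, j) * ∏ i : Fin n, ((i : ℕ)! : R) =
      (∑ j ∈ range n, j)! * (vandermonde a).det * (vandermonde b).det := by
  set N := ∑ j ∈ range n, j
  set K := Nat.multinomial univ fun i : Fin n => (i : ℕ)
  have hN : ∑ i : Fin n, (i : ℕ) = N := Fin.sum_univ_eq_sum_range id n
  have hK : (∏ i : Fin n, ((i : ℕ)! : R)) * K = N ! := by
    have h := Nat.multinomial_spec univ fun i : Fin n => (i : ℕ)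
    rw [hN] at h
    norm_cast
    exact congrArg Nat.cast h
  -- Only injective exponent vectors contribute, and those of total degree `N` are the
  -- rearrangements of `(0, 1, …, n - 1)`.
  have hsum : signedPermSum a b (· ^ N) = ∑ τ : Perm (Fin n),
      (K : R) * (vandermonde b).det * (Perm.sign τ • ∏ i, a i ^ (τ i : ℕ)) := by
    rw [signedPermSum_pow]
    refine (sum_of_injOn (fun τ i => (τ i : ℕ)) (fun τ _ τ' _ h => ?_) (fun τ _ => ?_)
      (fun m hm hm' => ?_) (fun τ _ => ?_)).symm
    · ext i
      exact congrFun h i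
    · simpa [mem_piAntidiag] using (Equiv.sum_comp τ fun i : Fin n => (i : ℕ)).trans hN
    · by_cases hinj : Injective m
      · obtain ⟨τ, hτ⟩ := exists_perm_of_injective_of_sum_eq hinj (mem_piAntidiag.1 hm).1
        exact absurd ⟨τ, mem_coe.2 (mem_univ τ), (funext hτ).symm⟩ hm'
      · rw [det_of_pow_eq_zero_of_not_injective b hinj, mul_zero]
    · have hKτ : Nat.multinomial univ (fun i => (τ i : ℕ)) = K :=
        Nat.multinomial_univ_comp_perm (fun i : Fin n => (i : ℕ)) τ
      rw [hKτ, det_of_pow_perm]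
      simp only [Units.smul_def, zsmul_eq_mul]
      ring
  rw [hsum, ← mul_sum, sum_sign_smul_prod_pow_eq_det_vandermonde]
  linear_combination (vandermonde a).det * (vandermonde b).det * hK

theorem signedPermSum_eval (Q : R[X]) :
    signedPermSum a b (fun x => Q.eval x) =
      ∑ j ∈ range (Q.natDegree + 1), Q.coeff j * signedPermSum a b (· ^ j) := by
  simp only [signedPermSum, eval_eq_sum_range, smul_sum, mul_sum]
  rw [sum_comm]
  refine sum_congr rfl fun j _ => sum_congr rfl fun σ _ => ?_
  rw [mul_smul_comm]

theorem signedPermSum_eval_eq_zero_of_natDegree_lt {Q : R[X]}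
    (hQ : Q.natDegree < ∑ j ∈ range n, j) : signedPermSum a b (fun x => Q.eval x) = 0 := by
  rw [signedPermSum_eval]
  refine sum_eq_zero fun j hj => ?_
  rw [signedPermSum_pow_eq_zero_of_lt a b (by rw [mem_range] at hj; omega), mul_zero]

theorem signedPermSum_eval_mul_prod_factorial {Q : R[X]} (hQ : Q.Monic)
    (hQN : Q.natDegree = ∑ j ∈ range n, j) :
    signedPermSum a b (fun x => Q.eval x) * ∏ i : Fin n, ((i : ℕ)! : R) =
      (∑ j ∈ range n, j)! * (vandermonde a).det * (vandermonde b).det := by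
  have hlead : Q.coeff (∑ j ∈ range n, j) = 1 := hQN ▸ hQ.coeff_natDegree
  have hlow : ∀ j ∈ range (∑ j ∈ range n, j), Q.coeff j * signedPermSum a b (· ^ j) = 0 :=
    fun j hj => by rw [signedPermSum_pow_eq_zero_of_lt a b (mem_range.1 hj), mul_zero]
  rw [signedPermSum_eval, hQN, sum_range_succ, sum_eq_zero hlow, zero_add, hlead, one_mul,
    signedPermSum_pow_mul_prod_factorial]

end SignedPermSum

section SignedExponentPoly

variable {n : ℕ} (a b : Fin n → ℕ)

noncomputable def signedExponentPoly : ℤ[X] :=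
  ∑ σ : Perm (Fin n), Perm.sign σ • X ^ (∑ i, a i * b (σ i))

theorem aeval_signedExponentPoly {K : Type*} [CommRing K] (ω : K) :
    aeval ω (signedExponentPoly a b) = (of fun i j => ω ^ (a i * b j)).det := by
  rw [← det_transpose, det_apply]
  simp [signedExponentPoly, ← prod_pow_eq_pow_sum, Units.smul_def]

theorem coeff_signedExponentPoly_comp_mul_factorial (k : ℕ) :
    ((signedExponentPoly a b).comp (X + 1)).coeff k * k ! =
      signedPermSum (fun i => (a i : ℤ)) (fun i => (b i : ℤ))
        (fun x => (descPochhammer ℤ k).eval x) := by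
  simp only [signedExponentPoly, signedPermSum, Polynomial.sum_comp, smul_comp, X_pow_comp,
    finsetSum_coeff, coeff_smul, coeff_X_add_one_pow, sum_mul, ← Nat.cast_mul, ← Nat.cast_sum]
  refine sum_congr rfl fun σ _ => ?_
  rw [descPochhammer_eval_eq_descFactorial, Nat.descFactorial_eq_factorial_mul_choose,
    Units.smul_def, Units.smul_def, smul_mul_assoc, mul_comm]
  push_cast
  ring

theorem coeff_signedExponentPoly_comp_eq_zero_of_lt {k : ℕ} (hk : k < ∑ j ∈ range n, j) :
    ((signedExponentPoly a b).comp (X + 1)).coeff k = 0 := by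
  have h := coeff_signedExponentPoly_comp_mul_factorial a b k
  rw [signedPermSum_eval_eq_zero_of_natDegree_lt _ _ (by rwa [descPochhammer_natDegree])] at h
  exact (mul_eq_zero.1 h).resolve_right (mod_cast k.factorial_ne_zero)

theorem coeff_signedExponentPoly_comp_mul_prod_factorial :
    ((signedExponentPoly a b).comp (X + 1)).coeff (∑ j ∈ range n, j) *
        ∏ i : Fin n, ((i : ℕ)! : ℤ) =
      (vandermonde fun i => (a i : ℤ)).det * (vandermonde fun i => (b i : ℤ)).det := by
  set N := ∑ j ∈ range n, j
  have h := signedPermSum_eval_mul_prod_factorial (fun i => (a i : ℤ)) (fun i => (b i : ℤ))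
    (monic_descPochhammer ℤ N) (descPochhammer_natDegree ℤ N)
  rw [← coeff_signedExponentPoly_comp_mul_factorial] at h
  refine mul_left_cancel₀ (mod_cast N.factorial_ne_zero : (N ! : ℤ) ≠ 0) ?_
  linear_combination h

end SignedExponentPoly

theorem Polynomial.trailingCoeff_eq_coeff_of_forall_lt {R : Type*} [Semiring R] {P : R[X]}
    {N : ℕ} (hN : P.coeff N ≠ 0) (hlow : ∀ k < N, P.coeff k = 0) :
    P.trailingCoeff = P.coeff N := by
  have hP : P ≠ 0 := fun h => hN (by rw [h, coeff_zero])
  rw [trailingCoeff,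
    le_antisymm (natTrailingDegree_le_of_ne_zero hN) (le_natTrailingDegree hP hlow)]

theorem Polynomial.prime_dvd_trailingCoeff_comp_X_add_one {p : ℕ} [Fact p.Prime] {F : ℤ[X]}
    (hF : cyclotomic p ℤ ∣ F) : (p : ℤ) ∣ (F.comp (X + 1)).trailingCoeff := by
  obtain ⟨G, rfl⟩ := hF
  have h0 : ((cyclotomic p ℤ).comp (X + 1)).coeff 0 = p := by
    simp [coeff_zero_eq_eval_zero, eval_comp, eval_one_cyclotomic_prime]
  have hΦ : ((cyclotomic p ℤ).comp (X + 1)).trailingCoeff = p :=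
    h0 ▸ trailingCoeff_eq_coeff_zero (h0 ▸ mod_cast (Fact.out : p.Prime).ne_zero)
  rw [mul_comp, trailingCoeff_mul, hΦ]
  exact dvd_mul_right _ _

theorem not_dvd_det_vandermonde_val {p : ℕ} [Fact p.Prime] {n : ℕ} {a : Fin n → ZMod p}
    (ha : Injective a) : ¬ (p : ℤ) ∣ (vandermonde fun i => ((a i).val : ℤ)).det := by
  have hmap : (Int.castRingHom (ZMod p)).mapMatrix (vandermonde fun i => ((a i).val : ℤ)) =
      vandermonde a := by
    ext i j
    simp
  rw [← ZMod.intCast_zmod_eq_zero_iff_dvd, ← eq_intCast (Int.castRingHom (ZMod p)),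
    RingHom.map_det, hmap]
  exact det_vandermonde_ne_zero_iff.2 ha

theorem IsPrimitiveRoot.det_pow_val_mul_val_ne_zero {K : Type*} [Field K] [CharZero K] {p : ℕ}
    [hp : Fact p.Prime] {ω : K} (hω : IsPrimitiveRoot ω p) {n : ℕ} {a b : Fin n → ZMod p}
    (ha : Injective a) (hb : Injective b) :
    (of fun i j => ω ^ ((a i).val * (b j).val)).det ≠ 0 := by
  set F := signedExponentPoly (fun i => (a i).val) (fun i => (b i).val)
  set N := ∑ j ∈ range n, j
  have hpN : ¬ (p : ℤ) ∣ (F.comp (X + 1)).coeff N := fun h => by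
    have := h.mul_right (∏ i : Fin n, ((i : ℕ)! : ℤ))
    rw [coeff_signedExponentPoly_comp_mul_prod_factorial] at this
    exact ((Nat.prime_iff_prime_int.1 hp.out).dvd_mul.1 this).elim
      (not_dvd_det_vandermonde_val ha) (not_dvd_det_vandermonde_val hb)
  have htc : (F.comp (X + 1)).trailingCoeff = (F.comp (X + 1)).coeff N :=
    trailingCoeff_eq_coeff_of_forall_lt (fun h => hpN (h ▸ dvd_zero _))
      fun k hk => coeff_signedExponentPoly_comp_eq_zero_of_lt _ _ hk
  intro hdet
  have hF : cyclotomic p ℤ ∣ F := by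
    rw [cyclotomic_eq_minpoly hω hp.out.pos]
    exact minpoly.isIntegrallyClosed_dvd (hω.isIntegral hp.out.pos)
      (by rw [aeval_signedExponentPoly]; exact hdet)
  exact hpN (htc ▸ prime_dvd_trailingCoeff_comp_X_add_one hF)

section DFT

variable {p : ℕ} [NeZero p]

noncomputable def fourierRoot (p : ℕ) : ℂ := Complex.exp (-(2 * Real.pi * Complex.I / p))

theorem isPrimitiveRoot_fourierRoot : IsPrimitiveRoot (fourierRoot p) p := by
  rw [fourierRoot, Complex.exp_neg]
  exact (Complex.isPrimitiveRoot_exp p (NeZero.ne p)).inv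

theorem dft_eq_sum_pow (f : ZMod p → ℂ) (ξ : ZMod p) :
    dft f ξ = (p : ℂ)⁻¹ * ∑ x, f x * fourierRoot p ^ (x.val * ξ.val) := by
  simp only [dft, fourierRoot, ← Complex.exp_nat_mul]
  congr! 4
  push_cast
  ring

variable (p) in
noncomputable def dftLinearMap : (ZMod p → ℂ) →ₗ[ℂ] (ZMod p → ℂ) where
  toFun := dft
  map_add' f g := by
    ext ξ
    simp only [dft, Pi.add_apply, add_mul, sum_add_distrib, mul_add]
  map_smul' c f := by
    ext ξ
    simp only [dft, Pi.smul_apply, smul_eq_mul, mul_sum, RingHom.id_apply]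
    exact sum_congr rfl fun x _ => by ring

theorem dftLinearMap_apply (f : ZMod p → ℂ) : dftLinearMap p f = dft f := rfl

theorem add_one_le_ncard_support_add_ncard_support_dft (hp : p.Prime) {f : ZMod p → ℂ}
    (hf : f ≠ 0) : p + 1 ≤ (support f).ncard + (support (dft f)).ncard := by
  classical
  have := Fact.mk hp
  by_contra! h
  set S := support f
  obtain ⟨U, hU, hUS⟩ : ∃ U ⊆ (support (dft f))ᶜ, U.ncard = S.ncard := by
    refine Set.exists_subset_card_eq ?_
    have := Set.ncard_add_ncard_compl (support (dft f))
    rw [Nat.card_zmod] at this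
    omega
  let eS : Fin S.ncard ≃ S := ((Finite.equivFin S).trans (finCongr (Nat.card_coe_set_eq S))).symm
  let eU : Fin S.ncard ≃ U :=
    ((Finite.equivFin U).trans (finCongr (hUS ▸ Nat.card_coe_set_eq U))).symm
  let a : Fin S.ncard → ZMod p := fun j => eS j
  let b : Fin S.ncard → ZMod p := fun i => eU i
  have hdet := isPrimitiveRoot_fourierRoot.det_pow_val_mul_val_ne_zero
    (Subtype.val_injective.comp eU.injective) (Subtype.val_injective.comp eS.injective)
  have hmul : (of fun i j => fourierRoot p ^ ((b i).val * (a j).val)) *ᵥ (f ∘ a) = 0 := by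
    ext i
    have h0 : dft f (b i) = 0 := notMem_support.1 (hU (eU i).2)
    rw [dft_eq_sum_pow, mul_eq_zero, or_iff_right (by simp [NeZero.ne p])] at h0
    have hoff : ∀ x ∉ S.toFinset, f x * fourierRoot p ^ (x.val * (b i).val) = 0 := fun x hx => by
      rw [notMem_support.1 (Set.mem_toFinset.not.1 hx), zero_mul]
    rw [Pi.zero_apply, ← h0, ← sum_subset (subset_univ _) fun x _ => hoff x, ← sum_set_coe,
      ← eS.sum_comp]
    simp [mulVec, dotProduct, a, mul_comm]
  have hfa := Matrix.eq_zero_of_mulVec_eq_zero hdet hmul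
  obtain ⟨x, hx⟩ := support_nonempty_iff.2 hf
  exact hx (by simpa [a] using congrFun hfa (eS.symm ⟨x, hx⟩))

noncomputable def dftSupportedIn (S T : Set (ZMod p)) : Submodule ℂ (ZMod p → ℂ) :=
  LinearMap.ker ((LinearMap.funLeft ℂ ℂ ((↑) : ↥Sᶜ → ZMod p)).prod
    (LinearMap.funLeft ℂ ℂ ((↑) : ↥Tᶜ → ZMod p) ∘ₗ dftLinearMap p))

theorem mem_dftSupportedIn {S T : Set (ZMod p)} {f : ZMod p → ℂ} :
    f ∈ dftSupportedIn S T ↔ support f ⊆ S ∧ support (dft f) ⊆ T := by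
  rw [support_subset_iff', support_subset_iff']
  simp [dftSupportedIn, funext_iff, dftLinearMap_apply]

theorem dftSupportedIn_ne_bot {S T : Set (ZMod p)} (h : p < S.ncard + T.ncard) :
    dftSupportedIn S T ≠ ⊥ := by
  classical
  refine LinearMap.ker_ne_bot_of_finrank_lt ?_
  simp only [Module.finrank_prod, Module.finrank_fintype_fun_eq_card, ← Nat.card_eq_fintype_card,
    Nat.card_coe_set_eq, Nat.card_zmod]
  have hS := Set.ncard_add_ncard_compl S
  have hT := Set.ncard_add_ncard_compl T
  rw [Nat.card_zmod] at hS hT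
  omega

theorem exists_support_eq_support_dft_eq (hp : p.Prime) {S T : Set (ZMod p)}
    (h : S.ncard + T.ncard = p + 1) :
    ∃ f : ZMod p → ℂ, support f = S ∧ support (dft f) = T := by
  obtain ⟨f, hfW, hf⟩ := Submodule.exists_mem_ne_zero_of_ne_bot
    (dftSupportedIn_ne_bot (S := S) (T := T) (by omega))
  obtain ⟨hfS, hfT⟩ := mem_dftSupportedIn.1 hfW
  have hunc := add_one_le_ncard_support_add_ncard_support_dft hp hf
  have hS := Set.ncard_le_ncard hfS
  have hT := Set.ncard_le_ncard hfT
  exact ⟨f, Set.eq_of_subset_of_ncard_le hfS (by omega),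
    Set.eq_of_subset_of_ncard_le hfT (by omega)⟩

theorem exists_mem_dftSupportedIn_ne_zero (hp : p.Prime) {A B : Set (ZMod p)}
    (hcard : p + 1 ≤ A.ncard + B.ncard) {x ξ : ZMod p} (hx : x ∈ A) (hξ : ξ ∈ B) :
    ∃ f ∈ dftSupportedIn A B, f x ≠ 0 ∧ dft f ξ ≠ 0 := by
  have hA := A.ncard_le_card
  have hB := B.ncard_le_card
  rw [Nat.card_zmod] at hA hB
  have hA1 := (show A.Nonempty from ⟨x, hx⟩).ncard_pos
  have hB1 := (show B.Nonempty from ⟨ξ, hξ⟩).ncard_pos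
  obtain ⟨S, hxS, hSA, hS⟩ := Set.exists_subsuperset_card_eq (Set.singleton_subset_iff.2 hx)
    (n := max 1 (p + 1 - B.ncard)) (by simp) (by omega)
  obtain ⟨T, hξT, hTB, hT⟩ := Set.exists_subsuperset_card_eq (Set.singleton_subset_iff.2 hξ)
    (n := p + 1 - max 1 (p + 1 - B.ncard)) (by simp; omega) (by omega)
  obtain ⟨f, rfl, rfl⟩ := exists_support_eq_support_dft_eq hp (S := S) (T := T) (by omega)
  exact ⟨f, mem_dftSupportedIn.2 ⟨hSA, hTB⟩, hxS rfl, hξT rfl⟩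

end DFT

theorem uncertainty_converse
    (p : ℕ) (hp : p.Prime) [NeZero p]
    (A B : Set (ZMod p)) (hA : A.Nonempty) (hB : B.Nonempty)
    (hcard : A.ncard + B.ncard ≥ p + 1) :
    ∃ f : ZMod p → ℂ, Function.support f = A ∧ Function.support (dft f) = B := by
  obtain ⟨x₀, hx₀⟩ := hA
  obtain ⟨ξ₀, hξ₀⟩ := hB
  let coord : A ⊕ B → Module.Dual ℂ (ZMod p → ℂ) :=
    Sum.elim (fun x => LinearMap.proj (x : ZMod p))
      (fun ξ => LinearMap.proj (ξ : ZMod p) ∘ₗ dftLinearMap p)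
  have hcoord : ∀ i, ∃ f ∈ dftSupportedIn A B, coord i f ≠ 0 := by
    rintro (⟨x, hx⟩ | ⟨ξ, hξ⟩)
    · obtain ⟨f, hf, hfx, -⟩ := exists_mem_dftSupportedIn_ne_zero hp hcard hx hξ₀
      exact ⟨f, hf, hfx⟩
    · obtain ⟨f, hf, -, hfξ⟩ := exists_mem_dftSupportedIn_ne_zero hp hcard hx₀ hξ
      exact ⟨f, hf, hfξ⟩
  obtain ⟨f, hfW, hf⟩ := Module.Dual.exists_forall_mem_ne_zero_of_forall_exists _ coord hcoord
  obtain ⟨hfA, hfB⟩ := mem_dftSupportedIn.1 hfW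
  exact ⟨f, hfA.antisymm fun x hx => hf (.inl ⟨x, hx⟩),
    hfB.antisymm fun ξ hξ => hf (.inr ⟨ξ, hξ⟩)⟩
end
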